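/- Let h be steep on B with steepness index α_m and coefficient C_m for m-dimensional subspaces, with m = dim Γ, and suppose a continuous curve u : [0,1] → Γ (Γ orthogonal to ω(I), u(0)=0) stays in the set {u : |π_Γ ω(I+u)|₂ ≤ C_m ξ^{α_m}} for all parameters. Then |u(t)|₂ < ξ for all t, for any ξ ∈ (0, δ]. That is, a curve drifting along the fast-drift plane I + Γ that remains in the tubular frequency-neighborhood of width C_m ξ^{α_m} around Λ⊥ cannot reach distance ξ from I. -/

import Mathlib

theorem ContinuousOn.exists_mem_Icc_norm_eq {E : Type*} [SeminormedAddCommGroup E]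
    {u : ℝ → E} {a b t η : ℝ} (hu : ContinuousOn u (Set.Icc a b)) (hua : u a = 0)
    (ht : t ∈ Set.Icc a b) (hη : η ∈ Set.Icc 0 ‖u t‖) :
    ∃ s ∈ Set.Icc a b, ‖u s‖ = η := by
  have hsub : Set.Icc a t ⊆ Set.Icc a b := Set.Icc_subset_Icc le_rfl ht.2
  obtain ⟨s, hs, hs_eq⟩ :=
    intermediate_value_Icc ht.1 (hu.mono hsub).norm (by rwa [hua, norm_zero])
  exact ⟨s, hsub hs, hs_eq⟩

theorem stmt_12_general (n : ℕ) (Γ : Submodule ℝ (EuclideanSpace ℝ (Fin n)))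
    (ω : EuclideanSpace ℝ (Fin n) → EuclideanSpace ℝ (Fin n))
    (I : EuclideanSpace ℝ (Fin n)) (C α δ : ℝ)
    -- steepness inequality at `I` along `Γ`
    (hsteep : ∀ ξ ∈ Set.Ioc (0 : ℝ) δ, ∃ η ∈ Set.Icc (0 : ℝ) ξ,
      ∀ u ∈ Γ, ‖u‖ = η →
        C * ξ ^ α < ‖(Submodule.orthogonalProjectionOnto Γ (ω (I + u)) : EuclideanSpace ℝ (Fin n))‖)
    (ξ : ℝ) (hξ : ξ ∈ Set.Ioc (0 : ℝ) δ)
    (u : ℝ → EuclideanSpace ℝ (Fin n))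
    (hcont : ContinuousOn u (Set.Icc (0 : ℝ) 1)) (hu0 : u 0 = 0)
    (huΓ : ∀ t ∈ Set.Icc (0 : ℝ) 1, u t ∈ Γ)
    (hstay : ∀ t ∈ Set.Icc (0 : ℝ) 1,
      ‖(Submodule.orthogonalProjectionOnto Γ (ω (I + u t)) : EuclideanSpace ℝ (Fin n))‖ ≤ C * ξ ^ α) :
    ∀ t ∈ Set.Icc (0 : ℝ) 1, ‖u t‖ < ξ := by
  intro t ht
  by_contra! hge
  obtain ⟨η, hη, hsteep_η⟩ := hsteep ξ hξ
  obtain ⟨s, hs, hs_norm⟩ := hcont.exists_mem_Icc_norm_eq hu0 ht ⟨hη.1, hη.2.trans hge⟩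
  exact (hsteep_η (u s) (huΓ s hs) hs_norm).not_ge (hstay s hs)

/-- Steepness confines drift along the fast-drift plane: a continuous curve in `Γ`
starting at `0` which stays in the tube `{u : |π_Γ ω(I+u)|₂ ≤ C ξ^α}` cannot reach
distance `ξ` from the origin, for any `ξ ∈ (0, δ]`. -/
theorem stmt_12 (n : ℕ) (Γ : Submodule ℝ (EuclideanSpace ℝ (Fin n)))
    (ω : EuclideanSpace ℝ (Fin n) → EuclideanSpace ℝ (Fin n))
    (I : EuclideanSpace ℝ (Fin n)) (C α δ : ℝ) (hC : 0 < C) (hα : 1 ≤ α) (hδ : 0 < δ)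
    -- steepness inequality at `I` along `Γ`
    (hsteep : ∀ ξ ∈ Set.Ioc (0 : ℝ) δ, ∃ η ∈ Set.Icc (0 : ℝ) ξ,
      ∀ u ∈ Γ, ‖u‖ = η →
        C * ξ ^ α < ‖(Submodule.orthogonalProjectionOnto Γ (ω (I + u)) : EuclideanSpace ℝ (Fin n))‖)
    (ξ : ℝ) (hξ : ξ ∈ Set.Ioc (0 : ℝ) δ)
    (u : ℝ → EuclideanSpace ℝ (Fin n))
    (hcont : ContinuousOn u (Set.Icc (0 : ℝ) 1)) (hu0 : u 0 = 0)
    (huΓ : ∀ t ∈ Set.Icc (0 : ℝ) 1, u t ∈ Γ)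
    (hstay : ∀ t ∈ Set.Icc (0 : ℝ) 1,
      ‖(Submodule.orthogonalProjectionOnto Γ (ω (I + u t)) : EuclideanSpace ℝ (Fin n))‖ ≤ C * ξ ^ α) :
    ∀ t ∈ Set.Icc (0 : ℝ) 1, ‖u t‖ < ξ :=
  stmt_12_general n Γ ω I C α δ hsteep ξ hξ u hcont hu0 huΓ hstay
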